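/- Case 2 (drift) disparity bound: With the same setup and hypotheses as the disparity score upper bound, if y_t is almost surely the one-hot vector of class 1 and y_v is almost surely the one-hot vector of class 2 (with c ≥ 2), and ‖E[X'_t]‖ ≤ σ, then ‖E[g_t] − E[g_v]‖ ≤ √(2(1 + σ²)). -/

import Mathlib

open scoped RealInnerProductSpace

/-- Outer product of two Euclidean vectors, flattened to a Euclidean vector. -/
def eOuter {c d : ℕ} (u : EuclideanSpace ℝ (Fin c)) (x : EuclideanSpace ℝ (Fin d)) :
    EuclideanSpace ℝ (Fin c × Fin d) :=
  WithLp.toLp 2 (fun q : Fin c × Fin d => u q.1 * x q.2)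

/-- Concatenation of two Euclidean vectors. -/
def eConcat {ι κ : Type*} (a : EuclideanSpace ℝ ι) (b : EuclideanSpace ℝ κ) :
    EuclideanSpace ℝ (ι ⊕ κ) :=
  WithLp.toLp 2 (Sum.elim a b)

/-- Expectation of a vector-valued random variable on a finite probability space
with weights `p`. -/
def eExpect {Ω : Type*} [Fintype Ω] (p : Ω → ℝ) {E : Type*} [AddCommMonoid E] [Module ℝ E]
    (Y : Ω → E) : E :=
  ∑ ω, p ω • Y ω

/-!
Writing `u ⊗ x` for the outer product, the expected gradient gap is
`(E[ŷ_t − y_t] − E[ŷ_v − y_v], E[(ŷ_t − y_t) ⊗ X_t] − E[(ŷ_v − y_v) ⊗ X_v])`. Expanding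
`(ŷ_t − y_t) X_t − (ŷ_v − y_v) X_v = (ŷ_t − ŷ_v) X_t + (ŷ_v − y_v)(X_t − X_v) − (y_t − y_v) X_t`,
the factorisation hypotheses turn each expectation into an outer product of means, and the
equal means of `ŷ` and `X` kill the first two. So only the label shift `E[y_v] − E[y_t] = e₂ − e₁`
survives: the gap is `(e₂ − e₁, (e₂ − e₁) ⊗ E[X_t])`, of norm `√2 · √(1 + ‖E[X_t]‖²)`.
-/

section Expectation

variable {Ω : Type*} [Fintype Ω] (p : Ω → ℝ)

theorem eExpect_sub {E : Type*} [AddCommGroup E] [Module ℝ E] (f g : Ω → E) :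
    eExpect p (fun ω => f ω - g ω) = eExpect p f - eExpect p g := by
  simp only [eExpect, smul_sub, Finset.sum_sub_distrib]

theorem eExpect_add {E : Type*} [AddCommGroup E] [Module ℝ E] (f g : Ω → E) :
    eExpect p (fun ω => f ω + g ω) = eExpect p f + eExpect p g := by
  simp only [eExpect, smul_add, Finset.sum_add_distrib]

theorem eExpect_const {p : Ω → ℝ} (hsum : ∑ ω, p ω = 1) {E : Type*} [AddCommMonoid E]
    [Module ℝ E] (v : E) : eExpect p (fun _ => v) = v := by
  rw [eExpect, ← Finset.sum_smul, hsum, one_smul]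

theorem eExpect_eConcat {ι κ : Type*} (f : Ω → EuclideanSpace ℝ ι)
    (g : Ω → EuclideanSpace ℝ κ) :
    eExpect p (fun ω => eConcat (f ω) (g ω)) = eConcat (eExpect p f) (eExpect p g) := by
  ext i
  cases i <;> simp [eExpect, eConcat, WithLp.ofLp_sum]

end Expectation

section Concat

variable {ι κ : Type*}

theorem eConcat_sub (a a' : EuclideanSpace ℝ ι) (b b' : EuclideanSpace ℝ κ) :
    eConcat a b - eConcat a' b' = eConcat (a - a') (b - b') := by
  ext i
  cases i <;> simp [eConcat]

theorem norm_eConcat [Fintype ι] [Fintype κ] (a : EuclideanSpace ℝ ι)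
    (b : EuclideanSpace ℝ κ) : ‖eConcat a b‖ = √(‖a‖ ^ 2 + ‖b‖ ^ 2) := by
  rw [EuclideanSpace.norm_eq, Fintype.sum_sum_type, EuclideanSpace.norm_eq,
    EuclideanSpace.norm_eq, Real.sq_sqrt (by positivity), Real.sq_sqrt (by positivity)]
  rfl

end Concat

section Outer

variable {c d : ℕ}

theorem eOuter_sub_left (u v : EuclideanSpace ℝ (Fin c)) (x : EuclideanSpace ℝ (Fin d)) :
    eOuter (u - v) x = eOuter u x - eOuter v x := by
  ext q
  simp [eOuter, sub_mul]

theorem eOuter_sub_right (u : EuclideanSpace ℝ (Fin c)) (x y : EuclideanSpace ℝ (Fin d)) :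
    eOuter u (x - y) = eOuter u x - eOuter u y := by
  ext q
  simp [eOuter, mul_sub]

@[simp]
theorem eOuter_zero_left (x : EuclideanSpace ℝ (Fin d)) :
    eOuter (0 : EuclideanSpace ℝ (Fin c)) x = 0 := by
  ext q
  simp [eOuter]

@[simp]
theorem eOuter_zero_right (u : EuclideanSpace ℝ (Fin c)) :
    eOuter u (0 : EuclideanSpace ℝ (Fin d)) = 0 := by
  ext q
  simp [eOuter]

theorem norm_eOuter (u : EuclideanSpace ℝ (Fin c)) (x : EuclideanSpace ℝ (Fin d)) :
    ‖eOuter u x‖ = ‖u‖ * ‖x‖ := by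
  rw [EuclideanSpace.norm_eq, EuclideanSpace.norm_eq, EuclideanSpace.norm_eq,
    ← Real.sqrt_mul (by positivity), Fintype.sum_prod_type, Finset.sum_mul_sum]
  simp [eOuter, mul_pow]

end Outer

theorem norm_single_sub_single {ι : Type*} [Fintype ι] [DecidableEq ι] {i j : ι} (hij : i ≠ j) :
    ‖EuclideanSpace.single i (1 : ℝ) - EuclideanSpace.single j 1‖ = √2 := by
  have horth : ⟪EuclideanSpace.single i (1 : ℝ), EuclideanSpace.single j 1⟫ = 0 := by
    simp [EuclideanSpace.inner_single_left, hij.symm]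
  rw [← Real.sqrt_sq (norm_nonneg _), norm_sub_sq_real, horth]
  norm_num [PiLp.norm_single]

section LossGradient

variable {Ω : Type*} [Fintype Ω] {c d : ℕ}

/-- The paper's `g = (ŷ − y, (ŷ − y) ⊗ x)`: the cross-entropy gradient of a linear softmax
classifier in its bias and weights. -/
def lossGrad (yh y : EuclideanSpace ℝ (Fin c)) (x : EuclideanSpace ℝ (Fin d)) :
    EuclideanSpace ℝ (Fin c ⊕ Fin c × Fin d) :=
  eConcat (yh - y) (eOuter (yh - y) x)

theorem norm_lossGrad (yh y : EuclideanSpace ℝ (Fin c)) (x : EuclideanSpace ℝ (Fin d)) :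
    ‖lossGrad yh y x‖ = ‖yh - y‖ * √(1 + ‖x‖ ^ 2) := by
  rw [lossGrad, norm_eConcat, norm_eOuter,
    show ‖yh - y‖ ^ 2 + (‖yh - y‖ * ‖x‖) ^ 2 = ‖yh - y‖ ^ 2 * (1 + ‖x‖ ^ 2) by ring,
    Real.sqrt_mul (sq_nonneg _), Real.sqrt_sq (norm_nonneg _)]

theorem eExpect_lossGrad_sub_eq (p : Ω → ℝ) {yt yv yht yhv : Ω → EuclideanSpace ℝ (Fin c)}
    {Xt Xv : Ω → EuclideanSpace ℝ (Fin d)}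
    (h1 : eExpect p yht = eExpect p yhv)
    (h2 : eExpect p Xt = eExpect p Xv)
    (h3 : eExpect p (fun ω => eOuter (yht ω - yhv ω) (Xt ω))
        = eOuter (eExpect p (fun ω => yht ω - yhv ω)) (eExpect p Xt))
    (h4 : eExpect p (fun ω => eOuter (yhv ω - yv ω) (Xt ω - Xv ω))
        = eOuter (eExpect p (fun ω => yhv ω - yv ω)) (eExpect p (fun ω => Xt ω - Xv ω)))
    (h5 : eExpect p (fun ω => eOuter (yt ω - yv ω) (Xt ω))
        = eOuter (eExpect p (fun ω => yt ω - yv ω)) (eExpect p Xt)) :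
    eExpect p (fun ω => lossGrad (yht ω) (yt ω) (Xt ω))
        - eExpect p (fun ω => lossGrad (yhv ω) (yv ω) (Xv ω))
      = lossGrad (eExpect p yv) (eExpect p yt) (eExpect p Xt) := by
  have hbias : eExpect p (fun ω => yht ω - yt ω) - eExpect p (fun ω => yhv ω - yv ω)
      = eExpect p yv - eExpect p yt := by
    rw [eExpect_sub, eExpect_sub, h1]
    abel
  have hsplit : (fun ω => eOuter (yht ω - yt ω) (Xt ω) - eOuter (yhv ω - yv ω) (Xv ω))
      = fun ω => (eOuter (yht ω - yhv ω) (Xt ω) + eOuter (yhv ω - yv ω) (Xt ω - Xv ω))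
          - eOuter (yt ω - yv ω) (Xt ω) := by
    funext ω
    simp only [eOuter_sub_left, eOuter_sub_right]
    abel
  have hweight : eExpect p (fun ω => eOuter (yht ω - yt ω) (Xt ω))
      - eExpect p (fun ω => eOuter (yhv ω - yv ω) (Xv ω))
      = eOuter (eExpect p yv - eExpect p yt) (eExpect p Xt) := by
    have hyh : eExpect p (fun ω => yht ω - yhv ω) = 0 := by rw [eExpect_sub, h1, sub_self]
    have hX : eExpect p (fun ω => Xt ω - Xv ω) = 0 := by rw [eExpect_sub, h2, sub_self]
    rw [← eExpect_sub, hsplit, eExpect_sub, eExpect_add, h3, h4, h5, hyh, hX, eOuter_zero_left,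
      eOuter_zero_right, zero_add, eExpect_sub, eOuter_sub_left, eOuter_sub_left]
    abel
  simp only [lossGrad]
  rw [eExpect_eConcat, eExpect_eConcat, eConcat_sub, hbias, hweight]

end LossGradient

theorem case2_drift_disparity {Ω : Type*} [Fintype Ω] (p : Ω → ℝ)
    (hsum : ∑ ω, p ω = 1)
    {c d' : ℕ} (hc : 2 ≤ c) (yt yv yht yhv : Ω → EuclideanSpace ℝ (Fin c))
    (Xt Xv : Ω → EuclideanSpace ℝ (Fin d')) (σ : ℝ)
    (h1 : eExpect p yht = eExpect p yhv)
    (h2 : eExpect p Xt = eExpect p Xv)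
    (h3 : eExpect p (fun ω => eOuter (yht ω - yhv ω) (Xt ω))
        = eOuter (eExpect p (fun ω => yht ω - yhv ω)) (eExpect p Xt))
    (h4 : eExpect p (fun ω => eOuter (yhv ω - yv ω) (Xt ω - Xv ω))
        = eOuter (eExpect p (fun ω => yhv ω - yv ω)) (eExpect p (fun ω => Xt ω - Xv ω)))
    (h5 : eExpect p (fun ω => eOuter (yt ω - yv ω) (Xt ω))
        = eOuter (eExpect p (fun ω => yt ω - yv ω)) (eExpect p Xt))
    (hσ : ‖eExpect p Xt‖ ≤ σ)
    (hyt : ∀ ω, yt ω = EuclideanSpace.single (⟨0, by omega⟩ : Fin c) (1 : ℝ))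
    (hyv : ∀ ω, yv ω = EuclideanSpace.single (⟨1, by omega⟩ : Fin c) (1 : ℝ)) :
    ‖eExpect p (fun ω => eConcat (yht ω - yt ω) (eOuter (yht ω - yt ω) (Xt ω)))
        - eExpect p (fun ω => eConcat (yhv ω - yv ω) (eOuter (yhv ω - yv ω) (Xv ω)))‖
      ≤ Real.sqrt (2 * (1 + σ ^ 2)) := by
  have hEyt : eExpect p yt = _ := (congrArg (eExpect p) (funext hyt)).trans (eExpect_const hsum _)
  have hEyv : eExpect p yv = _ := (congrArg (eExpect p) (funext hyv)).trans (eExpect_const hsum _)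
  change ‖eExpect p (fun ω => lossGrad (yht ω) (yt ω) (Xt ω))
      - eExpect p (fun ω => lossGrad (yhv ω) (yv ω) (Xv ω))‖ ≤ _
  rw [eExpect_lossGrad_sub_eq p h1 h2 h3 h4 h5, norm_lossGrad, hEyt, hEyv,
    norm_single_sub_single (by simp [Fin.ext_iff]), Real.sqrt_mul zero_le_two]
  gcongr
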